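/- Let n ≥ 2, let R be the full complete binary rooted tree with n leaves being 1, …, n read from left to right, and let T be any full binary rooted tree with n leaves being 1, …, n read from left to right. Let p and s be two distinct nodes of T, and let a and b be nodes of R with a ∈ X_{I_T(p)} and b ∈ X_{I_T(s)}. If a is an ancestor of b in R, then p is an ancestor of s in T or s is an ancestor of p in T; furthermore, if a is a strict ancestor of b in R, then p is a strict ancestor of s in T. -/
import Mathlib


/-- Full rooted binary trees: every internal node has exactly two children. -/
inductive BinTree where
  | leaf : BinTree
  | node : BinTree → BinTree → BinTree
deriving DecidableEq

namespace BinTree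

/-- The subtree of a binary tree rooted at the node addressed by the path `p` from the root
(`false` = go to the left child, `true` = go to the right child), if it exists. -/
def subtreeAt : BinTree → List Bool → Option BinTree
  | t, [] => some t
  | leaf, _ :: _ => none
  | node l _, false :: p => l.subtreeAt p
  | node _ r, true :: p => r.subtreeAt p

/-- `p` addresses a node of `T`. -/
def IsNode (T : BinTree) (p : List Bool) : Prop := (T.subtreeAt p).isSome

/-- `p` addresses a leaf of `T`. -/
def IsLeafPos (T : BinTree) (p : List Bool) : Prop := T.subtreeAt p = some leaf

/-- The depth of a binary tree: the maximum number of nodes on a root-to-leaf path. -/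
def depth : BinTree → ℕ
  | leaf => 1
  | node l r => max l.depth r.depth + 1

/-- The total number of nodes of a binary tree. -/
def numNodes : BinTree → ℕ
  | leaf => 1
  | node l r => l.numNodes + r.numNodes + 1

/-- The list of (addresses of) leaves of a binary tree, read from left to right. -/
def leaves : BinTree → List (List Bool)
  | leaf => [[]]
  | node l r => l.leaves.map (false :: ·) ++ r.leaves.map (true :: ·)

/-- A binary tree is perfect if all its leaves are at the same depth. -/
def IsPerfect : BinTree → Prop
  | leaf => True
  | node l r => l.IsPerfect ∧ r.IsPerfect ∧ l.depth = r.depth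

/-- A binary tree is complete if all its levels are completely filled, except possibly the
last one, wherein leaves are left-aligned. -/
inductive IsComplete : BinTree → Prop
  | leaf : IsComplete leaf
  | nodeLeft (l r : BinTree) : IsComplete l → r.IsPerfect → l.depth = r.depth + 1 →
      IsComplete (node l r)
  | nodeRight (l r : BinTree) : l.IsPerfect → IsComplete r → l.depth = r.depth →
      IsComplete (node l r)

/-- With the leaves of `T` numbered `1, …, n` from left to right, `T.leafSet x` is the set of
numbers of the leaves of the subtree of `T` rooted at `x`. -/
def leafSet (T : BinTree) (x : List Bool) : Set ℕ :=
  {k | 1 ≤ k ∧ k ≤ T.leaves.length ∧ x <+: T.leaves.getD (k - 1) []}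

theorem subtreeAt_append (T : BinTree) (p q : List Bool) :
    T.subtreeAt (p ++ q) = (T.subtreeAt p).bind (·.subtreeAt q) := by
  induction p generalizing T with
  | nil => simp [subtreeAt]
  | cons c p ih =>
    cases T with
    | leaf => simp [subtreeAt]
    | node l r => cases c <;> simp [subtreeAt, ih]

theorem exists_leaf_prefix {T : BinTree} {x : List Bool} (h : T.IsNode x) :
    ∃ L ∈ T.leaves, x <+: L := by
  induction T generalizing x with
  | leaf =>
    cases x with
    | nil => exact ⟨[], by simp [leaves], List.nil_prefix⟩
    | cons c x => simp [IsNode, subtreeAt] at h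
  | node l r ihl ihr =>
    cases x with
    | nil =>
      obtain ⟨L, hL, _⟩ := ihl (x := []) (by simp [IsNode, subtreeAt])
      refine ⟨false :: L, ?_, List.nil_prefix⟩
      simp only [leaves, List.mem_append, List.mem_map]
      exact Or.inl ⟨L, hL, rfl⟩
    | cons c x =>
      cases c with
      | false =>
        obtain ⟨L, hL, hpre⟩ := ihl (x := x) h
        refine ⟨false :: L, ?_, List.cons_prefix_cons.mpr ⟨rfl, hpre⟩⟩
        simp only [leaves, List.mem_append, List.mem_map]
        exact Or.inl ⟨L, hL, rfl⟩
      | true =>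
        obtain ⟨L, hL, hpre⟩ := ihr (x := x) h
        refine ⟨true :: L, ?_, List.cons_prefix_cons.mpr ⟨rfl, hpre⟩⟩
        simp only [leaves, List.mem_append, List.mem_map]
        exact Or.inr ⟨L, hL, rfl⟩

theorem exists_mem_leafSet {T : BinTree} {x : List Bool} (h : T.IsNode x) :
    ∃ k, k ∈ T.leafSet x := by
  obtain ⟨L, hL, hpre⟩ := exists_leaf_prefix h
  obtain ⟨i, hi, hLi⟩ := List.getElem_of_mem hL
  refine ⟨i + 1, by omega, by omega, ?_⟩
  simpa [List.getD, List.getElem?_eq_getElem hi, hLi] using hpre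

theorem leafSet_anti {T : BinTree} {x y : List Bool} (h : x <+: y) :
    T.leafSet y ⊆ T.leafSet x := fun k hk => ⟨hk.1, hk.2.1, h.trans hk.2.2⟩

theorem prefix_or_prefix_of_mem {T : BinTree} {x y : List Bool} {k : ℕ}
    (hx : k ∈ T.leafSet x) (hy : k ∈ T.leafSet y) : x <+: y ∨ y <+: x :=
  List.prefix_or_prefix_of_prefix hx.2.2 hy.2.2

theorem isNode_sibling {T : BinTree} {x : List Bool} {c : Bool} {rest : List Bool}
    (h : T.IsNode (x ++ c :: rest)) : T.IsNode (x ++ [!c]) := by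
  unfold IsNode at *
  rw [subtreeAt_append] at h ⊢
  cases hx : T.subtreeAt x with
  | none => rw [hx] at h; simp at h
  | some t =>
    rw [hx] at h
    cases t with
    | leaf => simp [subtreeAt] at h
    | node l r => cases c <;> simp [subtreeAt]

end BinTree

/-- `X` is a minimum-cardinality set of nodes of `R` whose subtrees' leaf sets partition the
set `I` (of leaf numbers). -/
def IsMinPartition (R : BinTree) (I : Set ℕ) (X : Finset (List Bool)) : Prop :=
  (∀ x ∈ X, R.IsNode x) ∧ (X : Set (List Bool)).PairwiseDisjoint R.leafSet ∧
  (⋃ x ∈ X, R.leafSet x) = I ∧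
  ∀ Y : Finset (List Bool), (∀ x ∈ Y, R.IsNode x) →
    (Y : Set (List Bool)).PairwiseDisjoint R.leafSet →
    (⋃ x ∈ Y, R.leafSet x) = I → X.card ≤ Y.card

open BinTree in
theorem key_no_strict_ancestor (R : BinTree) (I : Set ℕ) (Xs : Finset (List Bool))
    (hXs : IsMinPartition R I Xs) (a b : List Bool) (hb : b ∈ Xs)
    (haN : R.IsNode a) (haI : R.leafSet a ⊆ I)
    (hab : a <+: b) (hne : a ≠ b) : False := by
  classical
  obtain ⟨hnodes, hdisj, huni, hmin⟩ := hXs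
  obtain ⟨t, rfl⟩ := hab
  have ht : t ≠ [] := by rintro rfl; simp at hne
  obtain ⟨c, rest, rfl⟩ := List.exists_cons_of_ne_nil ht
  have hbN : R.IsNode (a ++ c :: rest) := hnodes _ hb
  have ha'N : R.IsNode (a ++ [!c]) := isNode_sibling hbN
  obtain ⟨kb, hkb⟩ := exists_mem_leafSet hbN
  obtain ⟨k', hk'⟩ := exists_mem_leafSet ha'N
  have hk'a : k' ∈ R.leafSet a := leafSet_anti (List.prefix_append _ _) hk'
  have hkba : kb ∈ R.leafSet a := leafSet_anti (List.prefix_append _ _) hkb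
  have hk'b : k' ∉ R.leafSet (a ++ c :: rest) := by
    intro hmem
    rcases prefix_or_prefix_of_mem hk' hmem with h | h
    · rw [List.prefix_append_right_inj] at h
      rw [List.cons_prefix_cons] at h
      simp at h
    · rw [List.prefix_append_right_inj] at h
      rw [List.cons_prefix_cons] at h
      simp at h
  have haXs : a ∉ Xs := fun haXs =>
    Set.disjoint_left.mp (hdisj (by exact_mod_cast haXs) (by exact_mod_cast hb) hne)
      hkba hkb
  have hdisj_a : ∀ x ∈ Xs, ¬ a <+: x → Disjoint (R.leafSet x) (R.leafSet a) := by
    intro x hx hnax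
    rw [Set.disjoint_left]
    intro k hkx hka
    rcases prefix_or_prefix_of_mem hkx hka with h | h
    · have hxb : x ≠ a ++ c :: rest := by
        rintro rfl; exact hnax (List.prefix_append _ _)
      exact Set.disjoint_left.mp (hdisj (by exact_mod_cast hx) (by exact_mod_cast hb) hxb)
        (leafSet_anti (h.trans (List.prefix_append _ _)) hkb) hkb
    · exact hnax h
  have hk'I : k' ∈ I := haI hk'a
  rw [← huni] at hk'I
  simp only [Set.mem_iUnion, exists_prop] at hk'I
  obtain ⟨x', hx'mem, hk'x'⟩ := hk'I
  have hax' : a <+: x' := by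
    by_contra hn
    exact Set.disjoint_left.mp (hdisj_a x' hx'mem hn) hk'x' hk'a
  have hx'b : x' ≠ a ++ c :: rest := fun h => hk'b (h ▸ hk'x')
  set X' := insert a (Xs.filter (fun x => ¬ a <+: x)) with hX'
  have hcard : X'.card < Xs.card := by
    have h2 : 2 ≤ (Xs.filter (fun x => a <+: x)).card := by
      refine Finset.one_lt_card.mpr ⟨a ++ c :: rest, ?_, x', ?_, ?_⟩
      · simp [Finset.mem_filter, hb, List.prefix_append]
      · simp [Finset.mem_filter, hx'mem, hax']
      · exact fun h => hx'b h.symm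
    have hsplit := Finset.card_filter_add_card_filter_not
      (s := Xs) (p := fun x => a <+: x)
    have hins := Finset.card_insert_le a (Xs.filter (fun x => ¬ a <+: x))
    rw [← hX'] at hins
    omega
  have hnodes' : ∀ x ∈ X', R.IsNode x := by
    intro x hx
    rcases Finset.mem_insert.mp hx with rfl | hx
    · exact haN
    · exact hnodes x (Finset.mem_of_mem_filter x hx)
  have hdisj' : (X' : Set (List Bool)).PairwiseDisjoint R.leafSet := by
    rw [hX', Finset.coe_insert]
    refine Set.PairwiseDisjoint.insert ?_ ?_
    · exact hdisj.subset (by intro x hx; exact_mod_cast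
        Finset.mem_of_mem_filter x (by exact_mod_cast hx))
    · intro x hx _
      have hx' := (by exact_mod_cast hx : x ∈ Xs.filter (fun x => ¬ a <+: x))
      rw [Finset.mem_filter] at hx'
      exact (hdisj_a x hx'.1 hx'.2).symm
  have huni' : (⋃ x ∈ X', R.leafSet x) = I := by
    ext k
    simp only [Set.mem_iUnion, exists_prop]
    constructor
    · rintro ⟨x, hx, hkx⟩
      rcases Finset.mem_insert.mp hx with rfl | hx
      · exact haI hkx
      · rw [Finset.mem_filter] at hx
        rw [← huni]
        simp only [Set.mem_iUnion, exists_prop]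
        exact ⟨x, hx.1, hkx⟩
    · intro hk
      rw [← huni] at hk
      simp only [Set.mem_iUnion, exists_prop] at hk
      obtain ⟨x, hx, hkx⟩ := hk
      by_cases hax : a <+: x
      · exact ⟨a, Finset.mem_insert_self _ _, leafSet_anti hax hkx⟩
      · exact ⟨x, Finset.mem_insert_of_mem (Finset.mem_filter.mpr ⟨hx, hax⟩), hkx⟩
  exact absurd (hmin X' hnodes' hdisj' huni') (by omega)


/-- Let `R` be the full complete binary rooted tree with `n ≥ 2` leaves and `T` any full
binary rooted tree with `n` leaves (leaves numbered `1, …, n` left to right in both). Let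
`p ≠ s` be nodes of `T`, and `a ∈ X_{I_T(p)}`, `b ∈ X_{I_T(s)}` nodes of `R`. If `a` is an
ancestor of `b` in `R` then `p` and `s` are comparable in `T`; if moreover `a` is a strict
ancestor of `b`, then `p` is a strict ancestor of `s`. -/
theorem pushed_up (n : ℕ) (hn : 2 ≤ n) (R T : BinTree)
    (hR : BinTree.IsComplete R) (hRn : R.leaves.length = n) (hTn : T.leaves.length = n)
    (p s : List Bool) (hp : T.IsNode p) (hs : T.IsNode s) (hps : p ≠ s)
    (Xp Xs : Finset (List Bool))
    (hXp : IsMinPartition R (T.leafSet p) Xp) (hXs : IsMinPartition R (T.leafSet s) Xs)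
    (a b : List Bool) (ha : a ∈ Xp) (hb : b ∈ Xs) :
    (a <+: b → (p <+: s ∨ s <+: p)) ∧
    (a <+: b ∧ a ≠ b → (p <+: s ∧ p ≠ s)) := by
  have haIp : R.leafSet a ⊆ T.leafSet p := by
    rw [← hXp.2.2.1]; exact Set.subset_iUnion₂ (s := fun x _ => R.leafSet x) a ha
  have hbIs : R.leafSet b ⊆ T.leafSet s := by
    rw [← hXs.2.2.1]; exact Set.subset_iUnion₂ (s := fun x _ => R.leafSet x) b hb
  have part1 : a <+: b → (p <+: s ∨ s <+: p) := by
    intro hab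
    obtain ⟨k, hk⟩ := BinTree.exists_mem_leafSet (hXs.1 b hb)
    exact BinTree.prefix_or_prefix_of_mem (haIp (BinTree.leafSet_anti hab hk)) (hbIs hk)
  refine ⟨part1, ?_⟩
  rintro ⟨hab, hne⟩
  rcases part1 hab with h | h
  · exact ⟨h, hps⟩
  · exact absurd (key_no_strict_ancestor R (T.leafSet s) Xs hXs a b hb (hXp.1 a ha)
      (haIp.trans (BinTree.leafSet_anti h)) hab hne) (by simp)
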